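/- With c − a = δ and α + β + γ = 0, the 3j symbol ( b a c ; β α γ ) equals (−1)^(b−a−γ) [(b+β)!(b−β)!(b−δ)!(b+δ)!/(2c+b−δ+1)]^(1/2) · Σ_z (−1)^z [Ω₁Ω₂Ω₃]^(1/2) / [z!(b−δ−z)!(b−β−z)!(β+δ+z)!], where Ω₁ = (2c−δ−b)!/(2c−δ+b)!, Ω₂ = (c+γ−δ+β)!(c+γ)!/[(c+γ−b+β+z)!]², Ω₃ = (c−γ−δ−β)!(c−γ)!/[(c−γ−δ−β−z)!]². -/
import Mathlib


open Real Filter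

/-- Factorial of a rational which is (in intended use) a non-negative integer. -/
noncomputable def hfact (q : ℚ) : ℝ := (Nat.factorial q.num.toNat : ℝ)

/-- `q` is a non-negative integer. -/
def isNNInt (q : ℚ) : Prop := 0 ≤ q ∧ q.den = 1

instance (q : ℚ) : Decidable (isNNInt q) := by unfold isNNInt; infer_instance

/-- `q` is a half-integer. -/
def isHalfInt (q : ℚ) : Prop := (2*q).den = 1

/-- `(-1)^q` for integer `q`, realized as `cos (q π)`. -/
noncomputable def msign (q : ℚ) : ℝ := Real.cos ((q : ℝ) * Real.pi)

/-- Triangle coefficient Δ(abc). -/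
noncomputable def tri (a b c : ℚ) : ℝ :=
  hfact (a+b-c) * hfact (a-b+c) * hfact (-a+b+c) / hfact (a+b+c+1)

/-- Admissibility of a triple: triangle inequality, non-negativity and integer sum. -/
def triAdm (a b c : ℚ) : Prop :=
  0 ≤ a ∧ 0 ≤ b ∧ 0 ≤ c ∧ c ≤ a + b ∧ a ≤ b + c ∧ b ≤ a + c ∧ (a+b+c).den = 1

/-- The Wigner 3j symbol, via the Racah single-sum formula (eq. (8)). -/
noncomputable def threeJ (a b c α β γ : ℚ) : ℝ :=
  Real.sqrt (tri a b c * hfact (a+α) * hfact (a-α) * hfact (b+β) * hfact (b-β)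
      * hfact (c+γ) * hfact (c-γ)) *
  ∑ z ∈ Finset.range ((a+b+c).num.toNat + 1),
    if isNNInt (a+b-c-(z:ℚ)) ∧ isNNInt (c-b+α+(z:ℚ)) ∧ isNNInt (b+β-(z:ℚ)) ∧
       isNNInt (a-α-(z:ℚ)) ∧ isNNInt (c-a-β+(z:ℚ))
    then msign ((z : ℚ) + a - b - γ) /
      ((Nat.factorial z : ℝ) * hfact (a+b-c-(z:ℚ)) * hfact (c-b+α+(z:ℚ)) * hfact (b+β-(z:ℚ))
        * hfact (a-α-(z:ℚ)) * hfact (c-a-β+(z:ℚ)))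
    else 0

/-- Admissibility of the arguments of a 3j symbol. -/
def threeJAdm (a b c α β γ : ℚ) : Prop :=
  triAdm a b c ∧ |α| ≤ a ∧ |β| ≤ b ∧ |γ| ≤ c ∧ α + β + γ = 0 ∧
    (a - α).den = 1 ∧ (b - β).den = 1 ∧ (c - γ).den = 1

/-- The 6j symbol, via the Racah single-sum formula. -/
noncomputable def sixJ (a b c d e f : ℚ) : ℝ :=
  Real.sqrt (tri a b c * tri c d e * tri a e f * tri b d f) *
  ∑ z ∈ Finset.range (2 * (a+b+c+d+e+f).num.toNat + 2),
    if isNNInt ((z:ℚ)-a-b-c) ∧ isNNInt ((z:ℚ)-a-e-f) ∧ isNNInt (b+c+e+f-(z:ℚ)) ∧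
       isNNInt ((z:ℚ)-d-e-c) ∧ isNNInt ((z:ℚ)-b-d-f) ∧ isNNInt (a+b+d+e-(z:ℚ)) ∧
       isNNInt (a+c+f+d-(z:ℚ))
    then (-1:ℝ)^z * (Nat.factorial (z+1) : ℝ) /
      (hfact ((z:ℚ)-a-b-c) * hfact ((z:ℚ)-a-e-f) * hfact (b+c+e+f-(z:ℚ)) * hfact ((z:ℚ)-d-e-c)
        * hfact ((z:ℚ)-b-d-f) * hfact (a+b+d+e-(z:ℚ)) * hfact (a+c+f+d-(z:ℚ)))
    else 0

/-- Admissibility of the arguments of a 6j symbol {a b c; d e f}. -/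
def sixJAdm (a b c d e f : ℚ) : Prop :=
  triAdm a b c ∧ triAdm c d e ∧ triAdm a e f ∧ triAdm b d f

/-- The rotation matrix element `d^j_{m',m}(θ)`. -/
noncomputable def dmat (j m' m : ℚ) (θ : ℝ) : ℝ :=
  msign (j - m') * Real.sqrt (hfact (j+m') * hfact (j-m') * hfact (j+m) * hfact (j-m)) *
  ∑ k ∈ Finset.range ((2*j).num.toNat + 1),
    if isNNInt (j-m'-(k:ℚ)) ∧ isNNInt (j-m-(k:ℚ)) ∧ isNNInt (m'+m+(k:ℚ))
    then (-1:ℝ)^k * (Real.cos (θ/2))^((2*(k:ℚ)+m'+m).num.toNat)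
        * (Real.sin (θ/2))^((2*j-2*(k:ℚ)-m'-m).num.toNat)
      / ((Nat.factorial k : ℝ) * hfact (j-m'-(k:ℚ)) * hfact (j-m-(k:ℚ)) * hfact (m'+m+(k:ℚ)))
    else 0


section Helpers

lemma hfact_pos (q : ℚ) : 0 < hfact q := by
  unfold hfact; exact_mod_cast Nat.factorial_pos _

lemma hfact_nonneg (q : ℚ) : 0 ≤ hfact q := (hfact_pos q).le

lemma hfact_ne (q : ℚ) : hfact q ≠ 0 := (hfact_pos q).ne'

lemma hfact_congr {x y : ℚ} (h : x = y) : hfact x = hfact y := by rw [h]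

lemma isNNInt_congr {x y : ℚ} (h : x = y) : isNNInt x ↔ isNNInt y := by rw [h]

lemma isNNInt_cast (q : ℚ) (h : isNNInt q) : ((q.num.toNat : ℚ)) = q := by
  obtain ⟨h0, h1⟩ := h
  have h2 := (Rat.den_eq_one_iff q).mp h1
  have h3 : 0 ≤ q.num := Rat.num_nonneg.mpr h0
  rw [← h2]
  exact_mod_cast congrArg (fun z : ℤ => (z : ℚ)) (Int.toNat_of_nonneg h3)

lemma isNNInt_iff (q : ℚ) : isNNInt q ↔ ∃ n : ℕ, q = (n:ℚ) := by
  constructor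
  · exact fun h => ⟨q.num.toNat, (isNNInt_cast q h).symm⟩
  · rintro ⟨n, rfl⟩; exact ⟨by positivity, Rat.den_natCast n⟩

lemma hfact_natCast (n : ℕ) : hfact (n:ℚ) = (Nat.factorial n : ℝ) := by
  unfold hfact; rw [Rat.num_natCast]; simp

lemma hfact_succ (q : ℚ) (h : isNNInt q) : hfact (q+1) = ((q:ℝ)+1) * hfact q := by
  obtain ⟨n, rfl⟩ := (isNNInt_iff q).mp h
  rw [show ((n:ℚ)+1) = ((n+1 : ℕ):ℚ) by push_cast; ring, hfact_natCast, hfact_natCast,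
    Nat.factorial_succ]
  push_cast; ring

lemma cos_nat_pi_add (n : ℕ) (x : ℝ) :
    Real.cos ((n:ℝ)*Real.pi + x) = (-1)^n * Real.cos x := by
  induction n with
  | zero => simp
  | succ k ih => push_cast; rw [add_mul, one_mul, add_right_comm, Real.cos_add_pi, ih]; ring

lemma msign_congr {x y : ℚ} (h : x = y) : msign x = msign y := by rw [h]

lemma msign_nat_add (z : ℕ) (q : ℚ) : msign ((z:ℚ) + q) = (-1)^z * msign q := by
  unfold msign
  push_cast
  rw [add_mul, cos_nat_pi_add]

lemma le_num_toNat (q : ℚ) (h : 0 ≤ q) : q ≤ (q.num.toNat : ℚ) := by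
  have hd : (1:ℚ) ≤ (q.den : ℚ) := by exact_mod_cast q.pos
  have h1 : (q.num : ℚ) = q * q.den := by
    rw [← Rat.mul_den_eq_num]
  have h2 : q ≤ (q.num : ℚ) := by
    rw [h1]; nlinarith
  calc q ≤ (q.num : ℚ) := h2
    _ ≤ (q.num.toNat : ℚ) := by exact_mod_cast Int.self_le_toNat q.num

lemma sum_ext (f g : ℕ → ℝ) (N M : ℕ) (hfg : ∀ z, f z = g z)
    (hf : ∀ z, N ≤ z → f z = 0) (hg : ∀ z, M ≤ z → g z = 0) :
    ∑ z ∈ Finset.range N, f z = ∑ z ∈ Finset.range M, g z := by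
  have h1 : ∑ z ∈ Finset.range N, f z = ∑ z ∈ Finset.range (max N M), f z :=
    Finset.sum_subset (Finset.range_subset_range.mpr (le_max_left N M))
      (fun x _ hx => hf x (by simpa using hx))
  have h2 : ∑ z ∈ Finset.range M, g z = ∑ z ∈ Finset.range (max N M), g z :=
    Finset.sum_subset (Finset.range_subset_range.mpr (le_max_right N M))
      (fun x _ hx => hg x (by simpa using hx))
  rw [h1, h2]; exact Finset.sum_congr rfl (fun z _ => hfg z)

end Helpers

set_option maxHeartbeats 2000000 in
/-- Equation (10): the exact rearrangement of the 3j symbol used in the proof of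
Theorem 1, with `δ = c - a` and `α + β + γ = 0`. -/
theorem stmt_18 (a b c α β γ δ : ℚ)
    (hadm : threeJAdm b a c β α γ) (hδ : δ = c - a) (hδb : |δ| ≤ b) :
    threeJ b a c β α γ
    = msign (b - a - γ) *
      Real.sqrt ((hfact (b+β) * hfact (b-β) * hfact (b-δ) * hfact (b+δ)) /
        ((2*c + b - δ + 1 : ℚ) : ℝ)) *
      ∑ z ∈ Finset.range ((2*b).num.toNat + 1),
        if isNNInt (b - δ - (z:ℚ)) ∧ isNNInt (b - β - (z:ℚ)) ∧ isNNInt (β + δ + (z:ℚ)) ∧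
           isNNInt (c + γ - b + β + (z:ℚ)) ∧ isNNInt (c - γ - δ - β - (z:ℚ))
        then (-1:ℝ)^z *
          Real.sqrt (
            (hfact (2*c - δ - b) / hfact (2*c - δ + b)) *
            (hfact (c + γ - δ + β) * hfact (c + γ) / (hfact (c + γ - b + β + (z:ℚ)))^2) *
            (hfact (c - γ - δ - β) * hfact (c - γ) / (hfact (c - γ - δ - β - (z:ℚ)))^2))
          / ((Nat.factorial z : ℝ) * hfact (b - δ - (z:ℚ)) * hfact (b - β - (z:ℚ)) *
              hfact (β + δ + (z:ℚ)))
        else 0 := by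
  obtain ⟨⟨hb0, ha0, hc0, hcba, hbac, habc, hden⟩, hα, hβ, hγ, hsum, hbβ, haα, hcγ⟩ := hadm
  subst hδ
  have hαv : α = -β - γ := by linarith
  subst hαv
  simp only [threeJ, tri]
  rw [Finset.mul_sum, Finset.mul_sum]
  have habs := abs_le.mp hδb
  have hsum3 : isNNInt (b + a + c) := ⟨by linarith, hden⟩
  refine sum_ext _ _ _ _ (fun z => ?_) (fun z hz => ?_) (fun z hz => ?_)
  · -- pointwise equality
    by_cases hPR : isNNInt (b - (c - a) - (z:ℚ)) ∧ isNNInt (b - β - (z:ℚ)) ∧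
        isNNInt (β + (c - a) + (z:ℚ)) ∧ isNNInt (c + γ - b + β + (z:ℚ)) ∧
        isNNInt (c - γ - (c - a) - β - (z:ℚ))
    · obtain ⟨p1, p2, p3, p4, p5⟩ := hPR
      have hPL : isNNInt (b + a - c - (z:ℚ)) ∧ isNNInt (c - a + β + (z:ℚ)) ∧
          isNNInt (a + (-β - γ) - (z:ℚ)) ∧ isNNInt (b - β - (z:ℚ)) ∧
          isNNInt (c - b - (-β - γ) + (z:ℚ)) :=
        ⟨(isNNInt_congr (by ring)).mpr p1, (isNNInt_congr (by ring)).mpr p3,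
         (isNNInt_congr (by ring)).mpr p5, p2, (isNNInt_congr (by ring)).mpr p4⟩
      rw [if_pos hPL, if_pos ⟨p1, p2, p3, p4, p5⟩]
      -- normalize msign
      rw [msign_congr (show (z:ℚ) + b - a - γ = (z:ℚ) + (b - a - γ) by ring), msign_nat_add]
      -- normalize hfact arguments
      rw [hfact_congr (show (b + a - c - (z:ℚ)) = b - (c - a) - (z:ℚ) by ring),
          hfact_congr (show (c - a + β + (z:ℚ)) = β + (c - a) + (z:ℚ) by ring),
          hfact_congr (show (a + (-β - γ) - (z:ℚ)) = c - γ - (c - a) - β - (z:ℚ) by ring),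
          hfact_congr (show (c - b - (-β - γ) + (z:ℚ)) = c + γ - b + β + (z:ℚ) by ring),
          hfact_congr (show (b + a - c : ℚ) = b - (c - a) by ring),
          hfact_congr (show (b - a + c : ℚ) = b + (c - a) by ring),
          hfact_congr (show (-b + a + c : ℚ) = 2*c - (c - a) - b by ring),
          hfact_congr (show (a + (-β - γ) : ℚ) = c - γ - (c - a) - β by ring),
          hfact_congr (show (a - (-β - γ) : ℚ) = c + γ - (c - a) + β by ring),
          show (b + a + c + 1 : ℚ) = (2*c - (c - a) + b) + 1 by ring,
          hfact_succ _ ((isNNInt_congr (show (2*c - (c - a) + b : ℚ) = b + a + c by ring)).mpr hsum3)]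
      set X := hfact (c + γ - b + β + (z:ℚ)) with hX
      set Y := hfact (c - γ - (c - a) - β - (z:ℚ)) with hY
      have hC1 : (0:ℝ) < ((2*c + b - (c - a) + 1 : ℚ) : ℝ) := by
        exact_mod_cast (show (0:ℚ) < 2*c + b - (c - a) + 1 by linarith)
      set Pre : ℝ := hfact (b+β) * hfact (b-β) * hfact (b - (c - a)) * hfact (b + (c - a)) /
        ((2*c + b - (c - a) + 1 : ℚ) : ℝ) with hPre
      set T : ℝ := hfact (2*c - (c - a) - b) / hfact (2*c - (c - a) + b) *
          (hfact (c + γ - (c - a) + β) * hfact (c + γ) / X ^ 2) *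
          (hfact (c - γ - (c - a) - β) * hfact (c - γ) / Y ^ 2) with hT
      have hPre0 : 0 ≤ Pre := by
        rw [hPre]
        exact div_nonneg (mul_nonneg (mul_nonneg (mul_nonneg (hfact_nonneg _)
          (hfact_nonneg _)) (hfact_nonneg _)) (hfact_nonneg _)) hC1.le
      have hT0 : 0 ≤ T := by
        rw [hT]
        refine mul_nonneg (mul_nonneg (div_nonneg (hfact_nonneg _) (hfact_nonneg _)) ?_) ?_ <;>
          exact div_nonneg (mul_nonneg (hfact_nonneg _) (hfact_nonneg _)) (sq_nonneg _)
      have hX0 : X ≠ 0 := hX ▸ hfact_ne _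
      have hY0 : Y ≠ 0 := hY ▸ hfact_ne _
      have hF : (z.factorial : ℝ) ≠ 0 := Nat.cast_ne_zero.mpr (Nat.factorial_ne_zero z)
      have h1c : ((2 * c + b - (c - a) + 1 : ℚ) : ℝ) = ((2 * c - (c - a) + b : ℚ) : ℝ) + 1 := by
        push_cast; ring
      have hplus : (0:ℝ) < ((2 * c - (c - a) + b : ℚ) : ℝ) + 1 := by rw [← h1c]; exact hC1
      have hTXY : T * (X * Y) ^ 2 = hfact (2 * c - (c - a) - b) *
          (hfact (c + γ - (c - a) + β) * hfact (c + γ)) *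
          (hfact (c - γ - (c - a) - β) * hfact (c - γ)) / hfact (2 * c - (c - a) + b) := by
        rw [hT, div_mul_div_comm, div_mul_div_comm, div_mul_eq_mul_div,
          div_eq_div_iff (by exact mul_ne_zero (mul_ne_zero (hfact_ne _)
            (pow_ne_zero 2 hX0)) (pow_ne_zero 2 hY0)) (hfact_ne _)]
        ring
      have hrad : hfact (b - (c - a)) * hfact (b + (c - a)) * hfact (2 * c - (c - a) - b) /
            ((((2 * c - (c - a) + b : ℚ) : ℝ) + 1) * hfact (2 * c - (c - a) + b)) *
            hfact (b + β) * hfact (b - β) * hfact (c - γ - (c - a) - β) *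
            hfact (c + γ - (c - a) + β) * hfact (c + γ) * hfact (c - γ)
          = Pre * (T * (X * Y) ^ 2) := by
        rw [hTXY, hPre, h1c]
        simp only [div_eq_mul_inv, mul_inv]
        ring
      have hDL : (z.factorial : ℝ) * hfact (b - (c - a) - (z:ℚ)) * hfact (β + (c - a) + (z:ℚ)) *
          Y * hfact (b - β - (z:ℚ)) * X ≠ 0 :=
        mul_ne_zero (mul_ne_zero (mul_ne_zero (mul_ne_zero (mul_ne_zero hF (hfact_ne _))
          (hfact_ne _)) hY0) (hfact_ne _)) hX0
      have hDR : (z.factorial : ℝ) * hfact (b - (c - a) - (z:ℚ)) * hfact (b - β - (z:ℚ)) *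
          hfact (β + (c - a) + (z:ℚ)) ≠ 0 :=
        mul_ne_zero (mul_ne_zero (mul_ne_zero hF (hfact_ne _)) (hfact_ne _)) (hfact_ne _)
      rw [hrad, Real.sqrt_mul hPre0, Real.sqrt_mul hT0,
        Real.sqrt_sq (mul_nonneg (hX ▸ hfact_nonneg _) (hY ▸ hfact_nonneg _)),
        mul_div_assoc', mul_div_assoc', div_eq_div_iff hDL hDR]
      ring
    · have hPL' : ¬ (isNNInt (b + a - c - (z:ℚ)) ∧ isNNInt (c - a + β + (z:ℚ)) ∧
          isNNInt (a + (-β - γ) - (z:ℚ)) ∧ isNNInt (b - β - (z:ℚ)) ∧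
          isNNInt (c - b - (-β - γ) + (z:ℚ))) := by
        rintro ⟨h1, h2, h3, h4, h5⟩
        exact hPR ⟨(isNNInt_congr (by ring)).mp h1, h4, (isNNInt_congr (by ring)).mp h2,
          (isNNInt_congr (by ring)).mp h5, (isNNInt_congr (by ring)).mp h3⟩
      rw [if_neg hPL', if_neg hPR, mul_zero, mul_zero]
  · -- LHS summand vanishes for large z
    rw [if_neg, mul_zero]
    rintro ⟨⟨h1, -⟩, -⟩
    have hz' : ((b + a + c).num.toNat + 1 : ℚ) ≤ (z:ℚ) := by exact_mod_cast hz
    have h2 := le_num_toNat (b + a + c) (by linarith)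
    linarith [sub_nonneg.mp h1]
  · -- RHS summand vanishes for large z
    rw [if_neg, mul_zero]
    rintro ⟨⟨h1, -⟩, -⟩
    have hz' : ((2 * b).num.toNat + 1 : ℚ) ≤ (z:ℚ) := by exact_mod_cast hz
    have h2 := le_num_toNat (2 * b) (by linarith)
    linarith [sub_nonneg.mp h1]
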